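/- arXiv:2507.09035 — 2 statements merged into one kernel-verified Lean document; each statement's English description precedes it below -/
import Mathlib

section
/- Let n ≥ 1. There is a dimensional constant c_n > 0 with the following property. Suppose A > 0, u : ℝⁿ → ℝ is continuously differentiable on the closed ball B̄(0,2), the function x ↦ u(x) + (A/2)‖x‖² is convex on B̄(0,2), and b := ‖∇u(0)‖ satisfies 0 < b ≤ A and ‖∇u(x)‖ ≤ b for all x ∈ B̄(0,2). Then ∫_{B(0,2)} u² dx ≥ c_n · b^{n+4} / A^{n+2}. -/
/-!
Along the segment from `0` to `∇u(0) / A`, the convex function `u + (A/2)‖·‖²` has slope at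
least `b = ‖∇u(0)‖` at `0`, so `u` rises by at least `b² / (2A)` there and `|u| ≥ b² / (4A)` at
one endpoint `p`, with `‖p‖ ≤ 1` because `b ≤ A`. As `‖∇u‖ ≤ b`, `u` is `b`-Lipschitz, so
`|u| ≥ b² / (8A)` on the ball of radius `b / (8A)` about `p`, which lies in `B(0, 2)`.
Integrating `u²` over that ball gives the bound with `c_n = |B(0, 1)| / (64 · 8ⁿ)`.
-/

open MeasureTheory Metric InnerProductSpace
open scoped RealInnerProductSpace

theorem ConvexOn.add_fderiv_sub_le {E : Type*} [NormedAddCommGroup E] [NormedSpace ℝ E]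
    {s : Set E} {f : E → ℝ} {f' : E →L[ℝ] ℝ} {x y : E}
    (hf : ConvexOn ℝ s f) (hx : x ∈ s) (hy : y ∈ s) (hf' : HasFDerivAt f f' x) :
    f x + f' (y - x) ≤ f y := by
  let line : ℝ →ᵃ[ℝ] E := AffineMap.lineMap x y
  have hconv : ConvexOn ℝ (Set.Icc 0 1) (f ∘ line) :=
    (hf.comp_affineMap line).subset (fun _ ht => hf.1.lineMap_mem hx hy ht) (convex_Icc 0 1)
  have hderiv : HasDerivAt (f ∘ line) (f' (y - x)) 0 := by
    rw [← AffineMap.lineMap_apply_zero (k := ℝ) x y] at hf'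
    exact hf'.comp_hasDerivAt 0 AffineMap.hasDerivAt_lineMap
  have := hconv.le_slope_of_hasDerivWithinAt (by simp) (by simp) zero_lt_one
    hderiv.hasDerivWithinAt
  simpa [slope_def_field, line, le_sub_iff_add_le'] using this

def SemiconvexOn {E : Type*} [NormedAddCommGroup E] [NormedSpace ℝ E] (A : ℝ) (s : Set E)
    (u : E → ℝ) : Prop :=
  ConvexOn ℝ s fun x => u x + A / 2 * ‖x‖ ^ 2

section Semiconvex

variable {E : Type*} [NormedAddCommGroup E] [InnerProductSpace ℝ E] [CompleteSpace E]

variable {A : ℝ} {s : Set E} {u : E → ℝ} {x y g : E}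

theorem SemiconvexOn.add_inner_sub_le (hu : SemiconvexOn A s u) (hx : x ∈ s) (hy : y ∈ s)
    (hg : HasGradientAt u g x) :
    u x + ⟪g, y - x⟫ - A / 2 * ‖y - x‖ ^ 2 ≤ u y := by
  have hf' := hg.hasFDerivAt.add ((hasStrictFDerivAt_norm_sq x).hasFDerivAt.const_mul (A / 2))
  have hfirst := ConvexOn.add_fderiv_sub_le hu hx hy hf'
  have hexpand : ‖y‖ ^ 2 = ‖x‖ ^ 2 + 2 * ⟪x, y - x⟫ + ‖y - x‖ ^ 2 := by
    simpa using norm_add_sq_real x (y - x)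
  simp only [add_apply, toDual_apply_apply, smul_apply,
    coe_innerSL_apply, nsmul_eq_mul, Nat.cast_ofNat, smul_eq_mul] at hfirst
  linear_combination hfirst + A / 2 * hexpand

theorem SemiconvexOn.add_sq_norm_div_le (hu : SemiconvexOn A s u) (hA : 0 < A) (hx : x ∈ s)
    (hy : x + A⁻¹ • g ∈ s) (hg : HasGradientAt u g x) :
    u x + ‖g‖ ^ 2 / (2 * A) ≤ u (x + A⁻¹ • g) := by
  have := hu.add_inner_sub_le hx hy hg
  rw [add_sub_cancel_left, real_inner_smul_right, real_inner_self_eq_norm_sq, norm_smul,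
    Real.norm_of_nonneg (inv_nonneg.2 hA.le)] at this
  convert this using 2
  field_simp
  ring

theorem SemiconvexOn.exists_sq_norm_div_le_abs (hu : SemiconvexOn A s u) (hA : 0 < A)
    (hx : x ∈ s) (hy : x + A⁻¹ • g ∈ s) (hg : HasGradientAt u g x) :
    ∃ p, ‖p - x‖ ≤ ‖g‖ / A ∧ ‖g‖ ^ 2 / (4 * A) ≤ |u p| := by
  by_contra! h
  have hgain := hu.add_sq_norm_div_le hA hx hy hg
  have hsplit : ‖g‖ ^ 2 / (2 * A) = 2 * (‖g‖ ^ 2 / (4 * A)) := by field_simp; ring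
  have h₁ := abs_lt.1 (h x (by rw [sub_self, norm_zero]; positivity))
  have h₂ := abs_lt.1 (h (x + A⁻¹ • g) (by
    rw [add_sub_cancel_left, norm_smul, norm_inv, Real.norm_of_nonneg hA.le, inv_mul_eq_div]))
  linarith

end Semiconvex

theorem Convex.abs_image_sub_le_of_norm_gradient_le {E : Type*} [NormedAddCommGroup E]
    [InnerProductSpace ℝ E] [CompleteSpace E] {f : E → ℝ} {s : Set E} {C : ℝ} {x y : E}
    (hs : Convex ℝ s) (hf : ∀ z ∈ s, DifferentiableAt ℝ f z) (bound : ∀ z ∈ s, ‖gradient f z‖ ≤ C)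
    (hx : x ∈ s) (hy : y ∈ s) : |f y - f x| ≤ C * ‖y - x‖ :=
  hs.norm_image_sub_le_of_norm_fderiv_le hf
    (fun z hz => by simpa [gradient] using bound z hz) hx hy

theorem Measure.addHaar_real_ball_of_pos {E : Type*} [NormedAddCommGroup E] [NormedSpace ℝ E]
    [MeasurableSpace E] [BorelSpace E] [FiniteDimensional ℝ E] (μ : Measure E) [μ.IsAddHaarMeasure]
    (x : E) {r : ℝ} (hr : 0 < r) :
    μ.real (ball x r) = r ^ Module.finrank ℝ E * μ.real (ball 0 1) := by
  rw [measureReal_def, Measure.addHaar_ball_of_pos μ x hr, ENNReal.toReal_mul,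
    ENNReal.toReal_ofReal (by positivity), measureReal_def]

theorem sq_mul_measureReal_ball_le_setIntegral_sq {α : Type*} [PseudoMetricSpace α]
    [ProperSpace α] [MeasurableSpace α] [OpensMeasurableSpace α] {μ : Measure α}
    [IsFiniteMeasureOnCompacts μ] {u : α → ℝ} {s : Set α} {p : α} {r δ m : ℝ}
    (hint : IntegrableOn (fun x => u x ^ 2) s μ) (hsub : ball p r ⊆ s)
    (hosc : ∀ x ∈ ball p r, |u x - u p| ≤ δ) (hm : 0 ≤ m) (hp : δ + m ≤ |u p|) :
    m ^ 2 * μ.real (ball p r) ≤ ∫ x in s, u x ^ 2 ∂μ := by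
  have hlow : ∀ x ∈ ball p r, m ^ 2 ≤ u x ^ 2 := fun x hx => by
    have := abs_sub_abs_le_abs_sub (u p) (u x)
    rw [abs_sub_comm] at this
    simpa using pow_le_pow_left₀ hm (show m ≤ |u x| by linarith [hosc x hx]) 2
  calc m ^ 2 * μ.real (ball p r) ≤ ∫ x in ball p r, u x ^ 2 ∂μ :=
        setIntegral_ge_of_const_le_real measurableSet_ball measure_ball_lt_top.ne hlow
          (hint.mono_set hsub)
    _ ≤ ∫ x in s, u x ^ 2 ∂μ :=
        setIntegral_mono_set hint (ae_of_all _ fun _ => sq_nonneg _) hsub.eventuallyLE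

theorem semiconvex_L2_lower_bound_small_gradient_general (n : ℕ) :
    ∃ c : ℝ, 0 < c ∧
      ∀ (A : ℝ), 0 < A →
      ∀ u : EuclideanSpace ℝ (Fin n) → ℝ,
        ContDiffOn ℝ 1 u (closedBall 0 2) →
        ConvexOn ℝ (closedBall 0 2) (fun x => u x + (A / 2) * ‖x‖ ^ 2) →
        0 < ‖gradient u 0‖ →
        ‖gradient u 0‖ ≤ A →
        (∀ x ∈ closedBall (0 : EuclideanSpace ℝ (Fin n)) 2,
            ‖gradient u x‖ ≤ ‖gradient u 0‖) →
        (∫ x in ball (0 : EuclideanSpace ℝ (Fin n)) 2, u x ^ 2) ≥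
          c * ‖gradient u 0‖ ^ (n + 4) / A ^ (n + 2) := by
  set V := volume.real (ball (0 : EuclideanSpace ℝ (Fin n)) 1) with hVdef
  have hV : 0 < V := ENNReal.toReal_pos (measure_ball_pos _ _ one_pos).ne' measure_ball_lt_top.ne
  refine ⟨V / (64 * 8 ^ n), by positivity, fun A hA u hC1 hconv hb hbA hmax => ?_⟩
  set b := ‖gradient u 0‖
  have hdiff : ∀ x ∈ ball 0 2, DifferentiableAt ℝ u x := fun x hx =>
    (hC1.differentiableOn one_ne_zero).differentiableAt (closedBall_mem_nhds_of_mem hx)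
  obtain ⟨p, hp, hup⟩ := SemiconvexOn.exists_sq_norm_div_le_abs hconv hA (by simp)
    (mem_closedBall_zero_iff.2 (by
      rw [zero_add, norm_smul, norm_inv, Real.norm_of_nonneg hA.le, inv_mul_le_iff₀ hA]; linarith))
    (hdiff 0 (by simp)).hasGradientAt
  rw [sub_zero] at hp
  set ρ := b / (8 * A)
  have hball : ball p ρ ⊆ ball 0 2 := by
    have hρ : ρ ≤ 1 := by rw [div_le_one (by positivity)]; linarith
    have hp₁ : ‖p‖ ≤ 1 := hp.trans ((div_le_one hA).2 hbA)
    exact ball_subset_ball' (by rw [dist_zero_right]; linarith)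
  have hosc : ∀ x ∈ ball p ρ, |u x - u p| ≤ b * ρ := fun x hx =>
    ((convex_ball 0 2).abs_image_sub_le_of_norm_gradient_le hdiff
      (fun z hz => hmax z (ball_subset_closedBall hz)) (hball (mem_ball_self (by positivity)))
      (hball hx)).trans (mul_le_mul_of_nonneg_left (mem_ball_iff_norm.1 hx).le hb.le)
  have hint : IntegrableOn (fun x => u x ^ 2) (ball (0 : EuclideanSpace ℝ (Fin n)) 2) :=
    ((hC1.continuousOn.pow 2).integrableOn_compact (isCompact_closedBall 0 2)).mono_set
      ball_subset_closedBall
  have hup' : b * ρ + b * ρ ≤ |u p| := by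
    convert hup using 1
    simp only [ρ]
    field_simp
    ring
  calc V / (64 * 8 ^ n) * b ^ (n + 4) / A ^ (n + 2)
      = (b * ρ) ^ 2 * volume.real (ball p ρ) := by
        rw [Measure.addHaar_real_ball_of_pos _ _ (by positivity), finrank_euclideanSpace_fin,
          ← hVdef]
        simp only [ρ, div_pow, mul_pow]
        field_simp
        ring
    _ ≤ _ := sq_mul_measureReal_ball_le_setIntegral_sq hint hball hosc (by positivity) hup'

/-- First case (`b ≤ A`) in the proof of Proposition 5.2: a dimensional constant `c_n > 0`
such that for any `A`-semiconvex `C¹` function whose gradient attains its maximal norm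
`b ∈ (0, A]` at the origin, `∫ u² ≥ c_n b^{n+4} / A^{n+2}`. -/
theorem semiconvex_L2_lower_bound_small_gradient (n : ℕ) (hn : 1 ≤ n) :
    ∃ c : ℝ, 0 < c ∧
      ∀ (A : ℝ), 0 < A →
      ∀ u : EuclideanSpace ℝ (Fin n) → ℝ,
        ContDiffOn ℝ 1 u (closedBall 0 2) →
        ConvexOn ℝ (closedBall 0 2) (fun x => u x + (A / 2) * ‖x‖ ^ 2) →
        0 < ‖gradient u 0‖ →
        ‖gradient u 0‖ ≤ A →
        (∀ x ∈ closedBall (0 : EuclideanSpace ℝ (Fin n)) 2,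
            ‖gradient u x‖ ≤ ‖gradient u 0‖) →
        (∫ x in ball (0 : EuclideanSpace ℝ (Fin n)) 2, u x ^ 2) ≥
          c * ‖gradient u 0‖ ^ (n + 4) / A ^ (n + 2) :=
  semiconvex_L2_lower_bound_small_gradient_general n
end

section
/- Let n ≥ 1. There is a dimensional constant c_n > 0 with the following property. Suppose A > 0, u : ℝⁿ → ℝ is continuously differentiable on the closed ball B̄(0,2), the function x ↦ u(x) + (A/2)‖x‖² is convex on B̄(0,2), and b := ‖∇u(0)‖ satisfies b ≥ A and ‖∇u(x)‖ ≤ b for all x ∈ B̄(0,2). Then ∫_{B(0,2)} u² dx ≥ c_n · b². -/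
/-! Semiconvexity along the unit vector `e = ∇u(0)/b` gives
`u(e) - u(0) ≥ ⟪∇u(0), e⟫ - A/2 = b - A/2 ≥ b/2`, so `|u| ≥ b/4` at `0` or at `e`.
As `u` is `b`-Lipschitz on `B(0,2)`, `|u| ≥ b/8` on the ball of radius `1/8` around that point,
which gives `∫ u² ≥ |B(0,1/8)| b² / 64`. -/

open MeasureTheory Metric InnerProductSpace

section

variable {F : Type*} [NormedAddCommGroup F]

theorem ConvexOn.apply_sub_le_sub_of_hasFDerivAt [NormedSpace ℝ F] {s : Set F} {f : F → ℝ}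
    {f' : F →L[ℝ] ℝ} {x y : F} (hf : ConvexOn ℝ s f) (hx : x ∈ s) (hy : y ∈ s)
    (h : HasFDerivAt f f' x) : f' (y - x) ≤ f y - f x := by
  set φ : ℝ →ᵃ[ℝ] F := AffineMap.lineMap x y
  have hφ : ∀ t : ℝ, φ t = t • (y - x) + x := fun t => AffineMap.lineMap_apply_module' x y t
  have hline : HasDerivAt (fun t : ℝ => t • (y - x) + x) (y - x) 0 := by
    simpa using ((hasDerivAt_id (0 : ℝ)).smul_const (y - x)).add_const x
  have hderiv : HasDerivAt (f ∘ φ) (f' (y - x)) 0 := by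
    refine (h.comp_hasDerivAt_of_eq 0 hline (by simp)).congr_of_eventuallyEq ?_
    exact Filter.Eventually.of_forall fun t => by simp [hφ]
  have := (hf.comp_affineMap φ).le_slope_of_hasDerivAt (x := 0) (y := 1)
    (by simpa [hφ] using hx) (by simpa [hφ] using hy) one_pos hderiv
  simpa [slope_def_field, hφ] using this

variable [InnerProductSpace ℝ F] [CompleteSpace F]

theorem inner_sub_le_sub_of_convexOn_add_sq {s : Set F} {u : F → ℝ} {A : ℝ} {g x y : F}
    (hu : ConvexOn ℝ s (fun z => u z + A / 2 * ‖z‖ ^ 2)) (hx : x ∈ s) (hy : y ∈ s)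
    (h : HasGradientAt u g x) : ⟪g, y - x⟫_ℝ - A / 2 * ‖y - x‖ ^ 2 ≤ u y - u x := by
  have hv := hu.apply_sub_le_sub_of_hasFDerivAt hx hy
    (h.hasFDerivAt.add ((hasStrictFDerivAt_norm_sq x).hasFDerivAt.const_mul (A / 2)))
  simp only [add_apply, smul_apply, toDual_apply_apply, innerSL_apply_apply, nsmul_eq_mul,
    inner_sub_right, real_inner_self_eq_norm_sq, smul_eq_mul, Nat.cast_ofNat] at hv
  rw [norm_sub_sq_real, inner_sub_right, real_inner_comm x y]
  linarith

theorem norm_sub_half_le_of_convexOn_add_sq {s : Set F} {u : F → ℝ} {A : ℝ} {g x : F}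
    (hu : ConvexOn ℝ s (fun z => u z + A / 2 * ‖z‖ ^ 2)) (hx : x ∈ s)
    (hy : x + ‖g‖⁻¹ • g ∈ s) (h : HasGradientAt u g x) (hg : g ≠ 0) :
    ‖g‖ - A / 2 ≤ u (x + ‖g‖⁻¹ • g) - u x := by
  have hg' : ‖g‖ ≠ 0 := norm_ne_zero_iff.2 hg
  have := inner_sub_le_sub_of_convexOn_add_sq hu hx hy h
  rwa [add_sub_cancel_left, real_inner_smul_right, real_inner_self_eq_norm_sq, norm_smul,
    norm_inv, norm_norm, inv_mul_cancel₀ hg', one_pow, mul_one, sq, ← mul_assoc,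
    inv_mul_cancel₀ hg', one_mul] at this

theorem abs_sub_le_of_norm_gradient_le {s : Set F} {u : F → ℝ} {C : ℝ} {x y : F}
    (hs : Convex ℝ s) (hu : ∀ z ∈ s, DifferentiableAt ℝ u z) (hC : ∀ z ∈ s, ‖gradient u z‖ ≤ C)
    (hx : x ∈ s) (hy : y ∈ s) : |u y - u x| ≤ C * ‖y - x‖ :=
  hs.norm_image_sub_le_of_norm_fderiv_le hu
    (fun z hz => by simpa only [gradient, LinearIsometryEquiv.norm_map] using hC z hz) hx hy

end

theorem mul_measureReal_ball_le_setIntegral_sq {X : Type*} [PseudoMetricSpace X] [ProperSpace X]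
    [MeasurableSpace X] [OpensMeasurableSpace X] {μ : Measure X} [IsFiniteMeasureOnCompacts μ]
    {f : X → ℝ} {x₀ : X} {r L : ℝ} {t : Set X} (hL : 0 ≤ L)
    (hf : ∀ x ∈ ball x₀ r, |f x - f x₀| ≤ L * dist x x₀) (hfx₀ : 2 * (L * r) ≤ |f x₀|)
    (hsub : ball x₀ r ⊆ t) (hint : IntegrableOn (fun x => f x ^ 2) t μ) :
    (L * r) ^ 2 * μ.real (ball x₀ r) ≤ ∫ x in t, f x ^ 2 ∂μ := by
  refine (setIntegral_ge_of_const_le_real measurableSet_ball measure_ball_lt_top.ne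
    (fun x hx => ?_) (hint.mono_set hsub)).trans
    (setIntegral_mono_set hint (ae_of_all _ fun _ => sq_nonneg _) hsub.eventuallyLE)
  have hdist : L * dist x x₀ ≤ L * r := mul_le_mul_of_nonneg_left (mem_ball.1 hx).le hL
  have hLr : L * r ≤ |f x| := by
    linarith [abs_sub_abs_le_abs_sub (f x₀) (f x), abs_sub_comm (f x₀) (f x), hf x hx]
  rw [← sq_abs (f x)]
  exact pow_le_pow_left₀ ((mul_nonneg hL dist_nonneg).trans hdist) hLr 2

theorem semiconvex_L2_lower_bound_large_gradient_general (n : ℕ) :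
    ∃ c : ℝ, 0 < c ∧
      ∀ (A : ℝ), 0 < A →
      ∀ u : EuclideanSpace ℝ (Fin n) → ℝ,
        ContDiffOn ℝ 1 u (closedBall 0 2) →
        ConvexOn ℝ (closedBall 0 2) (fun x => u x + (A / 2) * ‖x‖ ^ 2) →
        A ≤ ‖gradient u 0‖ →
        (∀ x ∈ closedBall (0 : EuclideanSpace ℝ (Fin n)) 2,
            ‖gradient u x‖ ≤ ‖gradient u 0‖) →
        (∫ x in ball (0 : EuclideanSpace ℝ (Fin n)) 2, u x ^ 2) ≥
          c * ‖gradient u 0‖ ^ 2 := by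
  refine ⟨volume.real (ball (0 : EuclideanSpace ℝ (Fin n)) (1 / 8)) / 64,
    div_pos (ENNReal.toReal_pos (measure_ball_pos _ _ (by norm_num)).ne' measure_ball_lt_top.ne)
      (by norm_num), ?_⟩
  intro A hA u hu hconv hAb hmax
  set b := ‖gradient u 0‖
  have hb : 0 < b := hA.trans_le hAb
  have hdiff : ∀ x ∈ ball (0 : EuclideanSpace ℝ (Fin n)) 2, DifferentiableAt ℝ u x :=
    fun x hx => (hu.differentiableOn one_ne_zero).differentiableAt
      (closedBall_mem_nhds_of_mem hx)
  obtain ⟨x₀, hx₀, hux₀⟩ : ∃ x₀ ∈ closedBall (0 : EuclideanSpace ℝ (Fin n)) 1, b / 4 ≤ |u x₀| := by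
    have hrise := norm_sub_half_le_of_convexOn_add_sq (x := 0) hconv (by simp)
      (by simp [b, norm_smul, hb.ne']) (hdiff 0 (by simp)).hasGradientAt (norm_pos_iff.1 hb)
    rw [zero_add] at hrise
    by_cases h0 : b / 4 ≤ |u 0|
    · exact ⟨0, by simp, h0⟩
    · exact ⟨b⁻¹ • gradient u 0, by simp [b, norm_smul, hb.ne'],
        by linarith [neg_abs_le (u 0), le_abs_self (u (b⁻¹ • gradient u 0))]⟩
  have hball : ball x₀ (1 / 8) ⊆ ball 0 2 :=
    ball_subset_ball' (by linarith [mem_closedBall.1 hx₀])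
  have hlip : ∀ x ∈ ball x₀ (1 / 8), |u x - u x₀| ≤ b * dist x x₀ := fun x hx =>
    dist_eq_norm x x₀ ▸ abs_sub_le_of_norm_gradient_le (convex_ball 0 2) hdiff
      (fun z hz => hmax z (ball_subset_closedBall hz)) (hball (mem_ball_self (by norm_num)))
      (hball hx)
  have hint : IntegrableOn (fun x => u x ^ 2) (ball 0 2) :=
    ((hu.continuousOn.pow 2).integrableOn_compact (isCompact_closedBall _ _)).mono_set
      ball_subset_closedBall
  calc _ = (b * (1 / 8)) ^ 2 * volume.real (ball x₀ (1 / 8)) := by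
        rw [Measure.addHaar_real_ball_center volume x₀]; ring
    _ ≤ _ := mul_measureReal_ball_le_setIntegral_sq hb.le hlip (by linarith) hball hint

/-- Second case (`b ≥ A`) in the proof of Proposition 5.2: a dimensional constant `c_n > 0`
such that for any `A`-semiconvex `C¹` function whose gradient attains its maximal norm
`b ≥ A` at the origin, `∫ u² ≥ c_n b²`. -/
theorem semiconvex_L2_lower_bound_large_gradient (n : ℕ) (hn : 1 ≤ n) :
    ∃ c : ℝ, 0 < c ∧
      ∀ (A : ℝ), 0 < A →
      ∀ u : EuclideanSpace ℝ (Fin n) → ℝ,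
        ContDiffOn ℝ 1 u (closedBall 0 2) →
        ConvexOn ℝ (closedBall 0 2) (fun x => u x + (A / 2) * ‖x‖ ^ 2) →
        A ≤ ‖gradient u 0‖ →
        (∀ x ∈ closedBall (0 : EuclideanSpace ℝ (Fin n)) 2,
            ‖gradient u x‖ ≤ ‖gradient u 0‖) →
        (∫ x in ball (0 : EuclideanSpace ℝ (Fin n)) 2, u x ^ 2) ≥
          c * ‖gradient u 0‖ ^ 2 :=
  semiconvex_L2_lower_bound_large_gradient_general n
end
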